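/- arXiv:2406.12777 — 2 statements merged into one kernel-verified Lean document; each statement's English description precedes it below -/
import Mathlib

section
/- Consider a short exact sequence of groups 1 → N → G → H → 1 in which both G and N are finitely generated. Then M_SFT(H) ⊆ M_SFT(G) and M_sof(H) ⊆ M_sof(G). -/
/-!
Pulling configurations back along `ρ : G → H` identifies `H`-configurations with the
`G`-configurations that are invariant under right multiplication by the kernel `N`. As `N` is
finitely generated, this invariance is enforced by finitely many forbidden two-cell patterns, so
the pullback of an `H`-SFT is a `G`-SFT; pulling back the factor map as well gives the sofic case.
The Medvedev degree does not change: the pullbacks to the free groups over the generators of `G`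
and of `H` are pullbacks of one `H`-subshift along two surjections of free groups onto `H`, and
any two such are Medvedev equivalent, since a lift between the free groups acts computably on
reduced words and a configuration can then be read off coordinate by coordinate.
-/

namespace MedvedevFormal

/-! ### Medvedev reducibility on Baire space -/

/-- The finite prefix of length `k` of a point of Baire space, as a list. -/
def pref (x : ℕ → ℕ) (k : ℕ) : List ℕ := (List.range k).map x

/-- Medvedev reducibility `m(P) ≤ m(Q)` between subsets of Baire space: some computable
monotone prefix-functional (i.e. a partial computable type-two functional), defined on all
of `Q`, maps every element of `Q` to an element of `P`. -/
def BaireLE (P Q : Set (ℕ → ℕ)) : Prop :=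
  ∃ φ : List ℕ → List ℕ, Computable φ ∧
    (∀ l₁ l₂ : List ℕ, l₁ <+: l₂ → φ l₁ <+: φ l₂) ∧
    ∀ x ∈ Q, ∃ y ∈ P, ∀ n : ℕ, ∃ k : ℕ, (φ (pref x k))[n]? = some (y n)

/-- Medvedev equivalence: `m(P) = m(Q)`. -/
def BaireEquiv (P Q : Set (ℕ → ℕ)) : Prop := BaireLE P Q ∧ BaireLE Q P

/-- A canonical representative of the join `m(P) ∨ m(Q)`. -/
def joinSet (P Q : Set (ℕ → ℕ)) : Set (ℕ → ℕ) :=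
  {x | (fun n => x (2 * n)) ∈ P ∧ (fun n => x (2 * n + 1)) ∈ Q}

/-- A canonical representative of the meet `m(P) ∧ m(Q)`. -/
def meetSet (P Q : Set (ℕ → ℕ)) : Set (ℕ → ℕ) :=
  {x | (x 0 = 0 ∧ (fun n => x (n + 1)) ∈ P) ∨ (x 0 = 1 ∧ (fun n => x (n + 1)) ∈ Q)}

/-- `P` has the zero Medvedev degree `0_M`: it contains a computable point. -/
def IsZeroDeg (P : Set (ℕ → ℕ)) : Prop := ∃ y ∈ P, Computable y

/-- The cylinder of a finite word in Baire space. -/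
def cylinder (l : List ℕ) : Set (ℕ → ℕ) :=
  {x | ∀ (i : ℕ) (h : i < l.length), x i = l[i]}

/-- Cantor space `{0,1}^ℕ` inside Baire space. -/
def cantorSpace : Set (ℕ → ℕ) := {x | ∀ n, x n ≤ 1}

/-- `P` is an effectively closed (`Π⁰₁`) subset of Cantor space: its complement within
Cantor space is the union of the cylinders of a computably enumerable sequence of words. -/
def IsPi01Cantor (P : Set (ℕ → ℕ)) : Prop :=
  ∃ f : ℕ → List ℕ, Computable f ∧ P = cantorSpace \ ⋃ n, cylinder (f n)

/-- The Medvedev degree of `P` is a `Π⁰₁` Medvedev degree. -/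
def IsPi01Deg (P : Set (ℕ → ℕ)) : Prop :=
  ∃ Q, IsPi01Cantor Q ∧ Q.Nonempty ∧ BaireEquiv P Q

/-- `P` realizes the maximal `Π⁰₁` Medvedev degree (the degree of the class of complete
consistent extensions of Peano arithmetic): it is a nonempty `Π⁰₁` subset of Cantor space
to which every nonempty `Π⁰₁` subset of Cantor space is Medvedev reducible. -/
def IsMaxPi01 (P : Set (ℕ → ℕ)) : Prop :=
  IsPi01Cantor P ∧ P.Nonempty ∧ ∀ Q, IsPi01Cantor Q → Q.Nonempty → BaireLE Q P

/-! ### Encoding of configuration spaces -/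

/-- The canonical encoding of a configuration `x : α → A` as a point of Baire space. -/
def confFun {α A : Type*} [Encodable α] [Encodable A] (x : α → A) : ℕ → ℕ :=
  fun n => Encodable.encode ((Encodable.decode (α := α) n).map x)

/-- The image of a set of configurations in Baire space, used to measure its
Medvedev degree. -/
def mSet {α A : Type*} [Encodable α] [Encodable A] (X : Set (α → A)) : Set (ℕ → ℕ) :=
  confFun '' X

/-- A configuration is computable if its Baire-space encoding is computable. -/
def ComputablePoint {α A : Type*} [Encodable α] [Encodable A] (x : α → A) : Prop :=
  Computable (confFun x)

/-- `m(X) ≤ m(Y)` for sets of configurations. -/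
def MedLE {α A β B : Type*} [Encodable α] [Encodable A] [Encodable β] [Encodable B]
    (X : Set (α → A)) (Y : Set (β → B)) : Prop :=
  BaireLE (mSet X) (mSet Y)

/-- `m(X) = m(Y)` for sets of configurations. -/
def MedEquiv {α A β B : Type*} [Encodable α] [Encodable A] [Encodable β] [Encodable B]
    (X : Set (α → A)) (Y : Set (β → B)) : Prop :=
  MedLE X Y ∧ MedLE Y X

/-! ### Subshifts -/

/-- The left shift action: `(g • x) h = x (g⁻¹ h)`. -/
def shift {G A : Type*} [Group G] (g : G) (x : G → A) : G → A := fun h => x (g⁻¹ * h)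

/-- The prodiscrete topology on `A^G`. -/
def prodiscrete (G A : Type*) : TopologicalSpace (G → A) :=
  @Pi.topologicalSpace G (fun _ => A) fun _ => ⊥

/-- A subshift: a shift-invariant subset of `A^G`, closed in the prodiscrete topology. -/
def IsSubshift {G A : Type*} [Group G] (X : Set (G → A)) : Prop :=
  (∀ x ∈ X, ∀ g : G, shift g x ∈ X) ∧ @IsClosed (G → A) (prodiscrete G A) X

/-- A pattern: a map `p : D → A` with `D ⊆ G` finite. -/
structure Pattern (G A : Type*) where
  dom : Finset G
  val : {g // g ∈ dom} → A

/-- The translate `g • x` agrees with the pattern `p` on its domain. -/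
def MatchesAt {G A : Type*} [Group G] (p : Pattern G A) (g : G) (x : G → A) : Prop :=
  ∀ h : {g' // g' ∈ p.dom}, shift g x h = p.val h

/-- A subshift of finite type: defined by a finite list of forbidden patterns. -/
def IsSFT {G A : Type*} [Group G] (X : Set (G → A)) : Prop :=
  ∃ F : List (Pattern G A), X = {x | ∀ p ∈ F, ∀ g : G, ¬MatchesAt p g x}

/-- A morphism between subshifts: a continuous shift-equivariant map from `X` to `Y`. -/
def IsMorphism {G A B : Type*} [Group G] (X : Set (G → A)) (Y : Set (G → B))
    (φ : (G → A) → (G → B)) : Prop :=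
  Set.MapsTo φ X Y ∧
    @ContinuousOn (G → A) (G → B) (prodiscrete G A) (prodiscrete G B) φ X ∧
    ∀ x ∈ X, ∀ g : G, φ (shift g x) = shift g (φ x)

/-- A sofic subshift: the image of an SFT (on some finite alphabet) under a topological
factor map. -/
def IsSofic {G A : Type*} [Group G] (X : Set (G → A)) : Prop :=
  ∃ (B : Type) (_ : Finite B) (Y : Set (G → B)) (φ : (G → B) → (G → A)),
    IsSFT Y ∧ IsMorphism Y X φ ∧ φ '' Y = X

/-! ### Finitely generated groups, covers and pullbacks -/

/-- `σ` enumerates a finite symmetric generating set of `G`. -/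
def IsSymmGen {G : Type*} [Group G] {k : ℕ} (σ : Fin k → G) : Prop :=
  Subgroup.closure (Set.range σ) = ⊤ ∧ ∀ i, (σ i)⁻¹ ∈ Set.range σ

/-- The canonical encoding of a free group via reduced words. -/
instance freeGroupEncodable {α : Type*} [DecidableEq α] [Encodable α] :
    Encodable (FreeGroup α) :=
  Encodable.ofLeftInjection FreeGroup.toWord (fun l => some (FreeGroup.mk l))
    fun _ => congrArg some FreeGroup.mk_toWord

/-- The canonical homomorphism from the free group determined by `σ`. -/
def cover {G : Type*} [Group G] {k : ℕ} (σ : Fin k → G) : FreeGroup (Fin k) →* G :=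
  FreeGroup.lift σ

/-- The pullback of a subshift along a group homomorphism. -/
def pullback {K G A : Type*} [Group K] [Group G] (ρ : K →* G) (X : Set (G → A)) :
    Set (K → A) :=
  (fun x => x ∘ ρ) '' X

/-- The group element represented by a word over the generators. -/
def wordVal {G : Type*} [Group G] {k : ℕ} (σ : Fin k → G) (w : List (Fin k × Bool)) : G :=
  cover σ (FreeGroup.mk w)

/-- `G` is recursively presented w.r.t. `σ`: its word problem is recursively enumerable. -/
def RecursivelyPresented {G : Type*} [Group G] {k : ℕ} (σ : Fin k → G) : Prop :=
  ∃ f : ℕ → Option (List (Fin k × Bool)), Computable f ∧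
    ∀ w : List (Fin k × Bool), (wordVal σ w = 1 ↔ ∃ n, f n = some w)

/-- The membership problem of the subgroup `H` in `G` is decidable w.r.t. `σ`. -/
def DecidableMembership {G : Type*} [Group G] {k : ℕ} (σ : Fin k → G)
    (H : Subgroup G) : Prop :=
  ∃ φ : List (Fin k × Bool) → Bool, Computable φ ∧
    ∀ w : List (Fin k × Bool), (φ w = true ↔ wordVal σ w ∈ H)

/-- `G` has decidable word problem w.r.t. `σ`. -/
def DecidableWordProblem {G : Type*} [Group G] {k : ℕ} (σ : Fin k → G) : Prop :=
  ∃ φ : List (Fin k × Bool) → Bool, Computable φ ∧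
    ∀ w : List (Fin k × Bool), (φ w = true ↔ wordVal σ w = 1)

/-- The set of configurations on the free group matching a coded pattern: a pattern is
coded as a list of pairs (code of a group element, code of a letter). -/
def codedCylinder {k : ℕ} {A : Type*} [Encodable A] (p : List (ℕ × ℕ)) :
    Set (FreeGroup (Fin k) → A) :=
  {x | ∀ q ∈ p, ∀ g : FreeGroup (Fin k),
    Encodable.encode g = q.1 → Encodable.encode (x g) = q.2}

/-- `X` is an effective subshift: the complement of its pullback to the free group is the
union of the cylinders of a computably enumerable sequence of finitely supported patterns. -/
def IsEffective {G : Type*} [Group G] {k : ℕ} (σ : Fin k → G) {A : Type*} [Encodable A]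
    (X : Set (G → A)) : Prop :=
  ∃ f : ℕ → List (ℕ × ℕ), Computable f ∧
    (pullback (cover σ) X)ᶜ = ⋃ n, codedCylinder (f n)

/-! ### Degree spectra -/

/-- The Medvedev degree of `P` belongs to `M_SFT(G)`: some nonempty `G`-SFT has the
Medvedev degree of `P`. -/
def IsSFTDeg {G : Type*} [Group G] {k : ℕ} (σ : Fin k → G) (P : Set (ℕ → ℕ)) : Prop :=
  ∃ (n : ℕ) (X : Set (G → Fin n)), IsSFT X ∧ X.Nonempty ∧
    BaireEquiv (mSet (pullback (cover σ) X)) P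

/-- The Medvedev degree of `P` belongs to `M_sof(G)`. -/
def IsSoficDeg {G : Type*} [Group G] {k : ℕ} (σ : Fin k → G) (P : Set (ℕ → ℕ)) : Prop :=
  ∃ (n : ℕ) (X : Set (G → Fin n)), IsSofic X ∧ X.Nonempty ∧
    BaireEquiv (mSet (pullback (cover σ) X)) P

/-- The Medvedev degree of `P` belongs to `M_eff(G)`. -/
def IsEffDeg {G : Type*} [Group G] {k : ℕ} (σ : Fin k → G) (P : Set (ℕ → ℕ)) : Prop :=
  ∃ (n : ℕ) (X : Set (G → Fin n)), IsSubshift X ∧ IsEffective σ X ∧ X.Nonempty ∧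
    BaireEquiv (mSet (pullback (cover σ) X)) P

/-! ### Word metrics and quasi-isometries -/

/-- The word length of `g` w.r.t. the (symmetric) generating map `σ`. -/
noncomputable def wordNorm {G : Type*} [Group G] {k : ℕ} (σ : Fin k → G) (g : G) : ℕ :=
  sInf {n | ∃ w : List (Fin k), w.length = n ∧ (w.map σ).prod = g}

/-- The word metric on `G` w.r.t. `σ`, as a real number. -/
noncomputable def wordDist {G : Type*} [Group G] {k : ℕ} (σ : Fin k → G) (g g' : G) : ℝ :=
  (wordNorm σ (g⁻¹ * g') : ℝ)

/-- `f : G → H` is a quasi-isometry w.r.t. the word metrics given by `σ` and `τ`. -/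
def IsQIGroups {G H : Type*} [Group G] [Group H] {k r : ℕ} (σ : Fin k → G)
    (τ : Fin r → H) (f : G → H) : Prop :=
  ∃ C : ℝ, 1 ≤ C ∧
    (∀ g g' : G, (1 / C) * wordDist σ g g' - C ≤ wordDist τ (f g) (f g') ∧
      wordDist τ (f g) (f g') ≤ C * wordDist σ g g' + C) ∧
    ∀ h : H, ∃ g : G, wordDist τ h (f g) ≤ C

/-- `f : G → Y` is a quasi-isometry from the group `G` (with word metric from `σ`) to the
metric space `Y`. -/
def IsQIToSpace {G : Type*} [Group G] {k : ℕ} (σ : Fin k → G) {Y : Type*}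
    [MetricSpace Y] (f : G → Y) : Prop :=
  ∃ C : ℝ, 1 ≤ C ∧
    (∀ g g' : G, (1 / C) * wordDist σ g g' - C ≤ dist (f g) (f g') ∧
      dist (f g) (f g') ≤ C * wordDist σ g g' + C) ∧
    ∀ y : Y, ∃ g : G, dist y (f g) ≤ C

/-- `f : G → H` is computable w.r.t. the generating maps `σ` and `τ`: some computable map
on words sends each word representing `g` to a word representing `f g`. -/
def ComputableMap {G H : Type*} [Group G] [Group H] {k r : ℕ} (σ : Fin k → G)
    (τ : Fin r → H) (f : G → H) : Prop :=
  ∃ φ : List (Fin k × Bool) → List (Fin r × Bool), Computable φ ∧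
    ∀ w : List (Fin k × Bool), wordVal τ (φ w) = f (wordVal σ w)

section BaireSpace

lemma getElem?_eq_some_of_prefix {α : Type*} {l₁ l₂ : List α} (h : l₁ <+: l₂) {i : ℕ}
    {a : α} (ha : l₁[i]? = some a) : l₂[i]? = some a := by
  obtain ⟨t, rfl⟩ := h
  rw [List.getElem?_append_left (List.getElem?_eq_some_iff.mp ha).1, ha]

@[simp]
lemma pref_length (x : ℕ → ℕ) (k : ℕ) : (pref x k).length = k := by
  simp [pref]

lemma pref_getElem? (x : ℕ → ℕ) {k i : ℕ} (h : i < k) : (pref x k)[i]? = some (x i) := by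
  simp [pref, h]

lemma pref_prefix (x : ℕ → ℕ) {k k' : ℕ} (h : k ≤ k') : pref x k <+: pref x k' := by
  rw [show pref x k = (pref x k').take k by simp [pref, ← List.map_take, List.take_range, h]]
  exact List.take_prefix _ _

lemma eq_pref_of_computes {ψ : List ℕ → List ℕ} (hψ : ∀ l₁ l₂, l₁ <+: l₂ → ψ l₁ <+: ψ l₂)
    {x y : ℕ → ℕ} (hxy : ∀ n, ∃ k, (ψ (pref x k))[n]? = some (y n)) (k : ℕ) :
    ψ (pref x k) = pref y (ψ (pref x k)).length := by
  refine List.ext_getElem (by simp) fun i hi _ => ?_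
  obtain ⟨k', hk'⟩ := hxy i
  have h₁ := getElem?_eq_some_of_prefix (hψ _ _ (pref_prefix x (le_max_left k k')))
    (List.getElem?_eq_getElem hi)
  have h₂ := getElem?_eq_some_of_prefix (hψ _ _ (pref_prefix x (le_max_right k k'))) hk'
  have := pref_getElem? y hi
  simp_all

lemma BaireLE.trans {P Q R : Set (ℕ → ℕ)} (h₁ : BaireLE P Q) (h₂ : BaireLE Q R) :
    BaireLE P R := by
  obtain ⟨φ, hφc, hφm, hφ⟩ := h₁
  obtain ⟨ψ, hψc, hψm, hψ⟩ := h₂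
  refine ⟨φ ∘ ψ, hφc.comp hψc, fun l₁ l₂ h => hφm _ _ (hψm _ _ h), fun x hx => ?_⟩
  obtain ⟨y, hyQ, hy⟩ := hψ x hx
  obtain ⟨z, hzP, hz⟩ := hφ y hyQ
  refine ⟨z, hzP, fun n => ?_⟩
  obtain ⟨K, hK⟩ := hz n
  obtain ⟨k, hk⟩ := hy K
  have hK_lt : K < (ψ (pref x k)).length := (List.getElem?_eq_some_iff.mp hk).1
  refine ⟨k, ?_⟩
  rw [Function.comp_apply, eq_pref_of_computes hψm hy k]
  exact getElem?_eq_some_of_prefix (hφm _ _ (pref_prefix y hK_lt.le)) hK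

end BaireSpace

section CoordinateReduction

variable (r : ℕ → Option ℕ)

/-- The value of output coordinate `n` read off a finite input word `l`, where `r n = some m`
means "copy input coordinate `m`" and `r n = none` means "output `0`"; it is `none` exactly when
`l` is too short. -/
def readCoord (l : List ℕ) (n : ℕ) : Option ℕ :=
  ((r n).map fun m => l[m]?).getD (some 0)

def copyLength (l : List ℕ) : ℕ :=
  Nat.findGreatest (fun j => ∀ i < j, (readCoord r l i).isSome) l.length

def copyCoords (l : List ℕ) : List ℕ :=
  (List.range (copyLength r l)).map fun i => (readCoord r l i).getD 0

variable {r}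

lemma readCoord_of_prefix {l₁ l₂ : List ℕ} (h : l₁ <+: l₂) {n a : ℕ}
    (ha : readCoord r l₁ n = some a) : readCoord r l₂ n = some a := by
  unfold readCoord at ha ⊢
  cases hr : r n with
  | none => simpa [hr] using ha
  | some m => simpa [hr] using getElem?_eq_some_of_prefix h (by simpa [hr] using ha)

lemma readCoord_isSome_of_lt_copyLength {l : List ℕ} {i : ℕ} (hi : i < copyLength r l) :
    (readCoord r l i).isSome :=
  Nat.findGreatest_spec (P := fun j => ∀ i < j, (readCoord r l i).isSome) (Nat.zero_le _)
    (by simp) i hi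

lemma copyLength_mono {l₁ l₂ : List ℕ} (h : l₁ <+: l₂) : copyLength r l₁ ≤ copyLength r l₂ := by
  refine Nat.findGreatest_mono (fun j hj i hi => ?_) h.length_le
  obtain ⟨a, ha⟩ := Option.isSome_iff_exists.mp (hj i hi)
  simp [readCoord_of_prefix h ha]

lemma copyCoords_prefix {l₁ l₂ : List ℕ} (h : l₁ <+: l₂) :
    copyCoords r l₁ <+: copyCoords r l₂ := by
  have hlen := copyLength_mono (r := r) h
  rw [List.prefix_iff_eq_take]
  refine List.ext_getElem (by simp [copyCoords, hlen]) fun i hi _ => ?_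
  simp only [copyCoords, List.length_map, List.length_range] at hi
  obtain ⟨a, ha⟩ := Option.isSome_iff_exists.mp (readCoord_isSome_of_lt_copyLength hi)
  simp [copyCoords, ha, readCoord_of_prefix h ha]

lemma primrec_copyCoords (hr : Primrec r) : Primrec (copyCoords r) := by
  have hread : Primrec₂ (readCoord r) :=
    (Primrec.option_getD.comp (Primrec.option_map (hr.comp Primrec.snd)
      (Primrec.list_getElem?.comp (Primrec.fst.comp Primrec.fst) Primrec.snd).to₂)
      (Primrec.const (some 0))).to₂
  have hlength : Primrec (copyLength r) := by
    have hsome : PrimrecRel fun i l => (readCoord r l i).isSome = true :=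
      Primrec.eq.comp (Primrec.option_isSome.comp (hread.comp Primrec.snd Primrec.fst))
        (Primrec.const true)
    refine Primrec.nat_findGreatest Primrec.list_length
      ((hsome.forall_mem_list.comp (Primrec.list_range.comp Primrec.snd) Primrec.fst).of_eq ?_)
    simp
  exact Primrec.list_map (Primrec.list_range.comp hlength)
    (Primrec.option_getD.comp (hread.comp Primrec.fst Primrec.snd) (Primrec.const 0)).to₂

lemma baireLE_of_copyCoords {P Q : Set (ℕ → ℕ)} (hr : Primrec r)
    (h : ∀ x ∈ Q, (fun n => ((r n).map x).getD 0) ∈ P) : BaireLE P Q := by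
  refine ⟨copyCoords r, (primrec_copyCoords hr).to_comp, fun _ _ => copyCoords_prefix,
    fun x hx => ⟨_, h x hx, fun n => ?_⟩⟩
  set k := n + 1 + (Finset.range (n + 1)).sup fun i => (r i).getD 0
  have hread : ∀ i ≤ n, readCoord r (pref x k) i = some (((r i).map x).getD 0) := by
    intro i hi
    cases hri : r i with
    | none => simp [readCoord, hri]
    | some m =>
      have : m ≤ (Finset.range (n + 1)).sup fun i => (r i).getD 0 := by
        simpa [hri] using Finset.le_sup (f := fun i => (r i).getD 0)
          (Finset.mem_range.mpr (Nat.lt_succ_of_le hi))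
      simp [readCoord, hri, pref_getElem? x (show m < k by omega)]
  have hn : n < copyLength r (pref x k) :=
    Nat.le_findGreatest (by simp; omega) fun i hi => by simp [hread i (by omega)]
  refine ⟨k, ?_⟩
  simp [copyCoords, hn, hread n le_rfl]

end CoordinateReduction

section FreeGroupCoding

open Encodable

lemma primrec_freeGroup_reduce {α : Type*} [Primcodable α] [DecidableEq α] :
    Primrec (FreeGroup.reduce (α := α)) := by
  let step : α × Bool → List (α × Bool) → List (α × Bool) := fun x acc =>
    List.casesOn acc [x] fun hd tl => if x.1 = hd.1 ∧ x.2 = !hd.2 then tl else x :: hd :: tl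
  have hreduce : ∀ L, FreeGroup.reduce L = L.foldr step [] := by
    intro L
    induction L with
    | nil => rfl
    | cons x L ih => rw [FreeGroup.reduce.cons, ih]; rfl
  have hnot : Primrec Bool.not := Primrec.dom_finite _
  have hcancel : PrimrecPred fun z : (List (α × Bool) × ((α × Bool) × List (α × Bool))) ×
      ((α × Bool) × List (α × Bool)) => z.1.2.1.1 = z.2.1.1 ∧ z.1.2.1.2 = !z.2.1.2 :=
    PrimrecPred.and
      (Primrec.eq.comp (Primrec.fst.comp (Primrec.fst.comp (Primrec.snd.comp Primrec.fst)))
        (Primrec.fst.comp (Primrec.fst.comp Primrec.snd)))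
      (Primrec.eq.comp (Primrec.snd.comp (Primrec.fst.comp (Primrec.snd.comp Primrec.fst)))
        (hnot.comp (Primrec.snd.comp (Primrec.fst.comp Primrec.snd))))
  have hstep : Primrec₂ fun (_ : List (α × Bool)) (q : (α × Bool) × List (α × Bool)) =>
      step q.1 q.2 :=
    (Primrec.list_casesOn (Primrec.snd.comp Primrec.snd)
      (Primrec.list_cons.comp (Primrec.fst.comp Primrec.snd) (Primrec.const []))
      (Primrec.ite hcancel (Primrec.snd.comp Primrec.snd)
        (Primrec.list_cons.comp (Primrec.fst.comp (Primrec.snd.comp Primrec.fst))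
          (Primrec.list_cons.comp (Primrec.fst.comp Primrec.snd)
            (Primrec.snd.comp Primrec.snd)))).to₂).to₂
  exact (Primrec.list_foldr Primrec.id (Primrec.const []) hstep).of_eq fun L => (hreduce L).symm

lemma FreeGroup.map_mk_eq_mk_flatMap {α β : Type*} [DecidableEq β]
    (θ : FreeGroup α →* FreeGroup β) (w : List (α × Bool)) :
    θ (FreeGroup.mk w) = FreeGroup.mk (w.flatMap fun p => (θ (FreeGroup.mk [p])).toWord) := by
  induction w with
  | nil => simp [← FreeGroup.one_eq_mk]
  | cons p w ih =>
    rw [List.flatMap_cons, ← FreeGroup.mul_mk, ← ih, FreeGroup.mk_toWord, ← map_mul,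
      FreeGroup.mul_mk, List.singleton_append]

lemma decode_freeGroup {α : Type*} [DecidableEq α] [Encodable α] (m : ℕ) :
    decode (α := FreeGroup α) m = (decode (α := List (α × Bool)) m).map FreeGroup.mk := by
  change Option.bind _ _ = _
  cases decode (α := List (α × Bool)) m <;> rfl

lemma primrec_decode_map_encode_hom {k l : ℕ} (θ : FreeGroup (Fin k) →* FreeGroup (Fin l)) :
    Primrec fun m => (decode (α := FreeGroup (Fin k)) m).map fun g => encode (θ g) := by
  let W : Fin k × Bool → List (Fin l × Bool) := fun p => (θ (FreeGroup.mk [p])).toWord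
  have hW : Primrec W := Primrec.dom_finite W
  refine (Primrec.option_map Primrec.decode ((Primrec.encode.comp (primrec_freeGroup_reduce.comp
    (Primrec.list_flatMap Primrec.id (hW.comp Primrec.snd).to₂))).comp Primrec.snd).to₂).of_eq ?_
  intro m
  rw [decode_freeGroup, Option.map_map]
  congr 1
  funext w
  simp only [Function.comp_apply, FreeGroup.map_mk_eq_mk_flatMap θ w, W]
  exact congrArg encode (FreeGroup.toWord_mk).symm

lemma medLE_image_comp {α β A : Type*} [Encodable α] [Encodable β] [Encodable A] (θ : α → β)
    (hθ : Primrec fun m => (decode (α := α) m).map fun a => encode (θ a)) (Y : Set (β → A)) :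
    MedLE ((fun y => y ∘ θ) '' Y) Y := by
  refine baireLE_of_copyCoords hθ ?_
  rintro _ ⟨y, hy, rfl⟩
  refine ⟨y ∘ θ, ⟨y, hy, rfl⟩, funext fun m => ?_⟩
  cases h : decode (α := α) m <;> simp [confFun, h]

lemma pullback_comp {K L G A : Type*} [Group K] [Group L] [Group G] (f : L →* G) (g : K →* L)
    (X : Set (G → A)) : pullback (f.comp g) X = pullback g (pullback f X) := by
  simp only [pullback, Set.image_image]
  rfl

lemma medLE_pullback_of_surjective {H A : Type*} [Group H] [Encodable A] {k l : ℕ}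
    (π₁ : FreeGroup (Fin k) →* H) {π₂ : FreeGroup (Fin l) →* H} (hπ₂ : Function.Surjective π₂)
    (X : Set (H → A)) : MedLE (pullback π₁ X) (pullback π₂ X) := by
  let θ := FreeGroup.lift fun i => Function.surjInv hπ₂ (π₁ (FreeGroup.of i))
  have hθ : π₂.comp θ = π₁ :=
    FreeGroup.ext_hom _ _ fun i => by simp [θ, Function.surjInv_eq hπ₂]
  rw [← hθ, pullback_comp]
  exact medLE_image_comp θ (primrec_decode_map_encode_hom θ) _

end FreeGroupCoding

section Pullback

variable {G H A : Type*} [Group G] [Group H]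

lemma shift_comp (ρ : G →* H) (g : G) (x : H → A) : shift g (x ∘ ρ) = shift (ρ g) x ∘ ρ := by
  funext g'
  simp [shift]

lemma IsSFT.inter {X Y : Set (G → A)} (hX : IsSFT X) (hY : IsSFT Y) : IsSFT (X ∩ Y) := by
  obtain ⟨F, rfl⟩ := hX
  obtain ⟨F', rfl⟩ := hY
  refine ⟨F ++ F', Set.ext fun x => ?_⟩
  simp only [Set.mem_inter_iff, Set.mem_ofPred_eq, List.mem_append]
  grind

def pairPattern [DecidableEq G] (t : G) (a b : A) : Pattern G A :=
  ⟨{1, t}, fun g => if (g : G) = 1 then a else b⟩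

lemma matchesAt_pairPattern [DecidableEq G] {t : G} (ht : t ≠ 1) (a b : A) (g : G) (x : G → A) :
    MatchesAt (pairPattern t a b) g x ↔ x g⁻¹ = a ∧ x (g⁻¹ * t) = b := by
  constructor
  · intro h
    exact ⟨by simpa [shift, pairPattern] using h ⟨1, by simp [pairPattern]⟩,
      by simpa [shift, pairPattern, ht] using h ⟨t, by simp [pairPattern]⟩⟩
  · rintro ⟨h₁, hₜ⟩ ⟨u, hu⟩
    obtain rfl | rfl : u = 1 ∨ u = t := by simpa [pairPattern] using hu
    · simp [shift, pairPattern, h₁]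
    · simp [shift, pairPattern, ht, hₜ]

lemma isSFT_mul_right_invariant [Finite A] (S : Finset G) :
    IsSFT {x : G → A | ∀ t ∈ S, ∀ g, x (g * t) = x g} := by
  classical
  have := Fintype.ofFinite A
  refine ⟨(S.filter (· ≠ 1)).toList.flatMap fun t =>
    ((Finset.univ : Finset (A × A)).filter fun q => q.1 ≠ q.2).toList.map fun q =>
      pairPattern t q.1 q.2, Set.ext fun x => ?_⟩
  simp only [Set.mem_ofPred_eq, List.mem_flatMap, List.mem_map, Finset.mem_toList,
    Finset.mem_filter, Finset.mem_univ, true_and]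
  constructor
  · rintro hx p ⟨t, ⟨htS, ht⟩, ⟨a, b⟩, hab, rfl⟩ g hm
    obtain ⟨ha, hb⟩ := (matchesAt_pairPattern ht a b g x).mp hm
    exact hab (by rw [← ha, ← hb, hx t htS])
  · intro hx t htS g
    by_cases ht : t = 1
    · rw [ht, mul_one]
    by_contra hne
    refine hx _ ⟨t, ⟨htS, ht⟩, (x g, x (g * t)), Ne.symm hne, rfl⟩ g⁻¹ ?_
    exact (matchesAt_pairPattern ht _ _ _ _).mpr (by simp)

lemma apply_mul_eq_of_mem_closure {S : Set G} {x : G → A} (hx : ∀ t ∈ S, ∀ g, x (g * t) = x g)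
    {n : G} (hn : n ∈ Subgroup.closure S) (g : G) : x (g * n) = x g := by
  induction hn using Subgroup.closure_induction generalizing g with
  | mem t ht => exact hx t ht g
  | one => rw [mul_one]
  | mul a b _ _ ha hb => rw [← mul_assoc, hb, ha]
  | inv a _ ha => rw [← ha (g * a⁻¹), inv_mul_cancel_right]

lemma comp_surjInv_comp {ρ : G →* H} (hρ : Function.Surjective ρ) {x : G → A}
    (hx : ∀ n ∈ ρ.ker, ∀ g, x (g * n) = x g) : (x ∘ Function.surjInv hρ) ∘ ρ = x := by
  funext g
  have hn : g⁻¹ * Function.surjInv hρ (ρ g) ∈ ρ.ker := by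
    simp [Function.surjInv_eq hρ]
  simpa using hx _ hn g

noncomputable def Pattern.comap {ρ : G →* H} (hρ : Function.Surjective ρ) (p : Pattern H A) :
    Pattern G A :=
  ⟨p.dom.map ⟨Function.surjInv hρ, Function.injective_surjInv hρ⟩, fun g => p.val ⟨ρ g, by
    obtain ⟨h, hh, hg⟩ := Finset.mem_map.mp g.2
    simpa [← hg, Function.surjInv_eq hρ] using hh⟩⟩

lemma matchesAt_comap {ρ : G →* H} (hρ : Function.Surjective ρ) (p : Pattern H A) (g : G)
    (x : H → A) : MatchesAt (p.comap hρ) g (x ∘ ρ) ↔ MatchesAt p (ρ g) x := by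
  have hval : ∀ h (hh : h ∈ p.dom) (hs : Function.surjInv hρ h ∈ (p.comap hρ).dom),
      (p.comap hρ).val ⟨_, hs⟩ = p.val ⟨h, hh⟩ :=
    fun h _ _ => congrArg p.val (Subtype.ext (Function.surjInv_eq hρ h))
  constructor
  · rintro hm ⟨h, hh⟩
    have hs : Function.surjInv hρ h ∈ (p.comap hρ).dom := Finset.mem_map_of_mem _ hh
    rw [← hval h hh hs, ← hm ⟨_, hs⟩, shift_comp]
    simp [Function.surjInv_eq hρ]
  · rintro hm ⟨u, hu⟩
    obtain ⟨h, hh, rfl⟩ := Finset.mem_map.mp hu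
    rw [show (p.comap hρ).val ⟨_, hu⟩ = p.val ⟨h, hh⟩ from hval h hh hu, ← hm ⟨h, hh⟩,
      shift_comp]
    simp [Function.surjInv_eq hρ]

lemma pullback_eq_inter {ρ : G →* H} (hρ : Function.Surjective ρ) {S : Finset G}
    (hS : Subgroup.closure (S : Set G) = ρ.ker) (F : List (Pattern H A)) :
    pullback ρ {y | ∀ p ∈ F, ∀ h, ¬MatchesAt p h y} =
      {x | ∀ t ∈ S, ∀ g, x (g * t) = x g} ∩
        {x | ∀ p ∈ F.map (Pattern.comap hρ), ∀ g, ¬MatchesAt p g x} := by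
  ext x
  constructor
  · rintro ⟨y, hy, rfl⟩
    refine ⟨fun t ht g => ?_, ?_⟩
    · have htker : t ∈ ρ.ker := hS ▸ Subgroup.subset_closure ht
      simp [MonoidHom.mem_ker.mp htker]
    · simp only [List.mem_map]
      rintro _ ⟨p, hp, rfl⟩ g hm
      exact hy p hp (ρ g) ((matchesAt_comap hρ p g y).mp hm)
  · rintro ⟨hinv, hpat⟩
    have hx := comp_surjInv_comp hρ fun n hn => apply_mul_eq_of_mem_closure hinv (hS ▸ hn)
    refine ⟨x ∘ Function.surjInv hρ, fun p hp h hm => ?_, hx⟩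
    obtain ⟨g, rfl⟩ := hρ h
    exact hpat _ (List.mem_map_of_mem hp) g (hx ▸ (matchesAt_comap hρ p g _).mpr hm)

lemma isSFT_pullback [Finite A] {ρ : G →* H} (hρ : Function.Surjective ρ) (hN : ρ.ker.FG)
    {X : Set (H → A)} (hX : IsSFT X) : IsSFT (pullback ρ X) := by
  obtain ⟨F, rfl⟩ := hX
  obtain ⟨S, hS⟩ := hN
  rw [pullback_eq_inter hρ hS F]
  exact (isSFT_mul_right_invariant S).inter ⟨_, rfl⟩

lemma isSofic_pullback {ρ : G →* H} (hρ : Function.Surjective ρ) (hN : ρ.ker.FG)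
    {X : Set (H → A)} (hX : IsSofic X) : IsSofic (pullback ρ X) := by
  obtain ⟨B, hB, Y, φ, hY, ⟨-, hcont, hequiv⟩, rfl⟩ := hX
  let ψ : (G → B) → (G → A) := fun y => φ (y ∘ Function.surjInv hρ) ∘ ρ
  have hsection : ∀ w : H → B, (w ∘ ρ) ∘ Function.surjInv hρ = w :=
    fun w => funext fun h => congrArg w (Function.surjInv_eq hρ h)
  have hψ : ∀ w, ψ (w ∘ ρ) = φ w ∘ ρ := fun w => by simp only [ψ, hsection]
  have himage : ψ '' pullback ρ Y = pullback ρ (φ '' Y) := by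
    simp only [pullback, Set.image_image, hψ]
  refine ⟨B, hB, pullback ρ Y, ψ, isSFT_pullback hρ hN hY,
    ⟨himage ▸ Set.mapsTo_image ψ _, ?_, ?_⟩, himage⟩
  · let : TopologicalSpace A := ⊥
    let : TopologicalSpace B := ⊥
    have hsection_mapsTo : Set.MapsTo (· ∘ Function.surjInv hρ) (pullback ρ Y) Y := by
      rintro _ ⟨w, hw, rfl⟩
      simpa [hsection] using hw
    exact (continuous_pi fun g => continuous_apply (ρ g)).comp_continuousOn
      ((hcont : ContinuousOn φ Y).comp (continuous_pi fun h => continuous_apply _).continuousOn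
        hsection_mapsTo)
  · rintro _ ⟨w, hw, rfl⟩ g
    rw [shift_comp, hψ, hψ, hequiv w hw, shift_comp]

end Pullback

lemma cover_surjective {G : Type*} [Group G] {k : ℕ} {σ : Fin k → G} (hσ : IsSymmGen σ) :
    Function.Surjective (cover σ) := by
  rw [← MonoidHom.range_eq_top, cover, FreeGroup.range_lift_eq_closure, hσ.1]

lemma medEquiv_pullback_of_surjective {H A : Type*} [Group H] [Encodable A] {k l : ℕ}
    {π₁ : FreeGroup (Fin k) →* H} {π₂ : FreeGroup (Fin l) →* H} (hπ₁ : Function.Surjective π₁)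
    (hπ₂ : Function.Surjective π₂) (X : Set (H → A)) :
    MedEquiv (pullback π₁ X) (pullback π₂ X) :=
  ⟨medLE_pullback_of_surjective π₁ hπ₂ X, medLE_pullback_of_surjective π₂ hπ₁ X⟩

/-- Given a short exact sequence `1 → N → G → H → 1` with `G` and `N` finitely
generated, `M_SFT(H) ⊆ M_SFT(G)` and `M_sof(H) ⊆ M_sof(G)`. -/
theorem statement5 {G H : Type*} [Group G] [Group H] {k l : ℕ}
    (σ : Fin k → G) (hσ : IsSymmGen σ) (τ : Fin l → H) (hτ : IsSymmGen τ)
    (ρ : G →* H) (hρ : Function.Surjective ρ) (hN : Group.FG ↥ρ.ker) :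
    ∀ P : Set (ℕ → ℕ),
      (IsSFTDeg τ P → IsSFTDeg σ P) ∧ (IsSoficDeg τ P → IsSoficDeg σ P) := by
  intro P
  have hker : ρ.ker.FG := (Group.fg_iff_subgroup_fg _).mp hN
  have hdeg : ∀ (n : ℕ) (X : Set (H → Fin n)), BaireEquiv (mSet (pullback (cover τ) X)) P →
      BaireEquiv (mSet (pullback (cover σ) (pullback ρ X))) P := by
    intro n X hX
    rw [← pullback_comp]
    obtain ⟨hle, hge⟩ :=
      medEquiv_pullback_of_surjective (π₁ := ρ.comp (cover σ)) (hρ.comp (cover_surjective hσ))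
        (cover_surjective hτ) X
    exact ⟨hle.trans hX.1, hX.2.trans hge⟩
  constructor
  · rintro ⟨n, X, hX, hne, hP⟩
    exact ⟨n, pullback ρ X, isSFT_pullback hρ hker hX, hne.image _, hdeg n X hP⟩
  · rintro ⟨n, X, hX, hne, hP⟩
    exact ⟨n, pullback ρ X, isSofic_pullback hρ hker hX, hne.image _, hdeg n X hP⟩

end MedvedevFormal
end

section
/- Let G be a finitely generated group which admits a nonempty G-SFT X with m(X) > 0_M. Then the domino problem of G is undecidable: there is no algorithm which, given a finite set of pattern codings, decides whether the G-SFT they define is nonempty. -/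
namespace MedvedevFormal

/-- The `G`-SFT described by an input to the domino problem is nonempty. An input
consists of an alphabet size `n` and a finite list of pattern codings, each coding being
a finite list of pairs (word over the generators, letter `< n`). -/
def codingSFTNonempty {G : Type*} [Group G] {k : ℕ} (σ : Fin k → G)
    (input : ℕ × List (List (List (Fin k × Bool) × ℕ))) : Prop :=
  ∃ x : G → ℕ, (∀ g : G, x g < input.1) ∧
    ∀ c ∈ input.2, ∀ g : G, ¬∀ p ∈ c, x (g * wordVal σ p.1) = p.2

/-!
Suppose a computable `φ` decided the domino problem, and let `D` be forbidden patterns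
defining `X`. Run through all pattern codings `c₀, c₁, …`, adding `cᵢ` to the forbidden list
whenever `φ` says the SFT stays nonempty. The intersection `Z` of these SFTs is a nonempty
subshift of `X`, and `c = cᵢ` occurs in `Z` iff it was rejected at stage `i`: if it was
rejected, every point of stage `i`, in particular of `Z`, contains a translate of `c`; if it
was added, no point of `Z` contains it. So the language of `Z` is decidable, and choosing
letters one at a time so that the pattern built so far occurs in `Z` computes a point of
`Z ⊆ X`, contradicting `m(X) > 0_M`.
-/

open Encodable

abbrev PatternCoding (k : ℕ) := List (List (Fin k × Bool) × ℕ)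

section PatternCodings

variable {k : ℕ}

/-- Reads a finite prefix `v` of a point of Baire space as a pattern coding: `v[j]` is the
letter at the word coded by `j` (entries at numbers coding no word are ignored). -/
def prefixCoding (k : ℕ) (v : List ℕ) : PatternCoding k :=
  (List.range v.length).filterMap fun j =>
    (decode (α := List (Fin k × Bool)) j).map fun l => (l, v.getD j 0)

def enumCoding (k : ℕ) (i : ℕ) : PatternCoding k :=
  prefixCoding k ((decode (α := List ℕ) i).getD [])

theorem enumCoding_encode (v : List ℕ) : enumCoding k (encode v) = prefixCoding k v := by
  simp [enumCoding]

theorem prefixCoding_primrec : Primrec (prefixCoding k) := by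
  have hget : Primrec fun q : (List ℕ × ℕ) × List (Fin k × Bool) => q.1.1.getD q.1.2 0 :=
    (Primrec.list_getD 0).comp (Primrec.fst.comp Primrec.fst) (Primrec.snd.comp Primrec.fst)
  exact Primrec.listFilterMap (Primrec.list_range.comp Primrec.list_length)
    (Primrec.option_map (Primrec.decode.comp Primrec.snd) (Primrec.pair Primrec.snd hget))

theorem enumCoding_primrec : Primrec (enumCoding k) :=
  prefixCoding_primrec.comp (Primrec.option_getD.comp Primrec.decode (Primrec.const []))

theorem prefixCoding_snoc (v : List ℕ) (a : ℕ) :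
    prefixCoding k (v ++ [a]) = prefixCoding k v ++
      ((decode (α := List (Fin k × Bool)) v.length).map fun l => (l, a)).toList := by
  rw [prefixCoding, List.length_append, List.length_singleton, List.range_succ,
    List.filterMap_append]
  congr 1
  · refine List.filterMap_congr fun j hj => ?_
    rw [List.getD_append _ _ _ _ (List.mem_range.1 hj)]
  · cases hd : decode (α := List (Fin k × Bool)) v.length <;> simp [hd]

theorem mem_prefixCoding {v : List ℕ} {m : ℕ} {l : List (Fin k × Bool)}
    (hm : m < v.length) (hd : decode (α := List (Fin k × Bool)) m = some l) :
    (l, v.getD m 0) ∈ prefixCoding k v :=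
  List.mem_filterMap.2 ⟨m, List.mem_range.2 hm, by rw [hd]; rfl⟩

end PatternCodings

section CodedSFT

variable {G : Type*} [Group G] {k : ℕ} (σ : Fin k → G) (n : ℕ)

theorem shift_one {A : Type*} (x : G → A) : shift 1 x = x := by
  funext h; simp [shift]

theorem shift_shift {A : Type*} (g g' : G) (x : G → A) :
    shift g (shift g' x) = shift (g * g') x := by
  funext h; simp [shift, mul_assoc]

theorem continuous_shift {A : Type*} [TopologicalSpace A] (g : G) :
    Continuous (shift (A := A) g) :=
  continuous_pi fun _ => continuous_apply _

def patternCylinder (c : PatternCoding k) : Set (G → Fin n) :=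
  {x | ∀ q ∈ c, (x (wordVal σ q.1)).val = q.2}

def codedSFT (D : List (PatternCoding k)) : Set (G → Fin n) :=
  {x | ∀ c ∈ D, ∀ g : G, shift g x ∉ patternCylinder σ n c}

variable {σ n}

theorem codingSFTNonempty_iff {D : List (PatternCoding k)} :
    codingSFTNonempty σ (n, D) ↔ (codedSFT σ n D).Nonempty := by
  constructor
  · rintro ⟨x, hx, hD⟩
    refine ⟨fun g => ⟨x g, hx g⟩, fun c hc g hg => hD c hc g⁻¹ fun q hq => ?_⟩
    simpa [shift] using hg q hq
  · rintro ⟨x, hx⟩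
    refine ⟨fun g => x g, fun g => (x g).isLt, fun c hc g hg => hx c hc g⁻¹ fun q hq => ?_⟩
    simpa [shift] using hg q hq

theorem shift_mem_codedSFT {D : List (PatternCoding k)} {x : G → Fin n}
    (hx : x ∈ codedSFT σ n D) (g : G) : shift g x ∈ codedSFT σ n D := by
  intro c hc g' hg'
  rw [shift_shift] at hg'
  exact hx c hc _ hg'

theorem codedSFT_append_subset (D D' : List (PatternCoding k)) :
    codedSFT σ n (D ++ D') ⊆ codedSFT σ n D :=
  fun _ hx c hc => hx c (List.mem_append_left _ hc)

theorem mem_codedSFT_append_singleton {D : List (PatternCoding k)} {c : PatternCoding k}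
    {x : G → Fin n} :
    x ∈ codedSFT σ n (D ++ [c]) ↔
      x ∈ codedSFT σ n D ∧ ∀ g, shift g x ∉ patternCylinder σ n c := by
  simp [codedSFT, or_imp, forall_and]

theorem isClosed_patternCylinder (c : PatternCoding k) :
    IsClosed (patternCylinder σ n c) := by
  simp only [patternCylinder, Set.ofPred_forall]
  exact isClosed_biInter fun q _ =>
    (isClosed_discrete {b : Fin n | b.val = q.2}).preimage
      (continuous_apply (A := fun _ : G => Fin n) (wordVal σ q.1))

theorem isOpen_patternCylinder (c : PatternCoding k) :
    IsOpen (patternCylinder σ n c) := by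
  simp only [patternCylinder, Set.ofPred_forall]
  exact (List.finite_toSet c).isOpen_biInter fun q _ =>
    (isOpen_discrete {b : Fin n | b.val = q.2}).preimage
      (continuous_apply (A := fun _ : G => Fin n) (wordVal σ q.1))

theorem isClosed_codedSFT (D : List (PatternCoding k)) : IsClosed (codedSFT σ n D) := by
  simp only [codedSFT, Set.ofPred_forall]
  exact isClosed_biInter fun c _ => isClosed_iInter fun g =>
    ((isOpen_patternCylinder c).preimage (continuous_shift g)).isClosed_compl

theorem wordVal_surjective (hσ : Subgroup.closure (Set.range σ) = ⊤) :
    Function.Surjective (wordVal σ) := by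
  intro g
  obtain ⟨u, rfl⟩ : g ∈ (cover σ).range := by
    rw [cover, FreeGroup.range_lift_eq_closure, hσ]; trivial
  exact ⟨u.toWord, by rw [wordVal, FreeGroup.mk_toWord]⟩

theorem exists_codedSFT_eq (hσ : Subgroup.closure (Set.range σ) = ⊤) {X : Set (G → Fin n)}
    (hX : IsSFT X) : ∃ D : List (PatternCoding k), codedSFT σ n D = X := by
  choose word hword using wordVal_surjective hσ
  obtain ⟨F, rfl⟩ := hX
  let code (p : Pattern G (Fin n)) : PatternCoding k :=
    p.dom.attach.toList.map fun h => (word h.1, (p.val h).val)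
  have cylinder_code (p : Pattern G (Fin n)) (g : G) (x : G → Fin n) :
      shift g x ∈ patternCylinder σ n (code p) ↔ MatchesAt p g x := by
    simp only [code, patternCylinder, Set.mem_ofPred_eq, List.forall_mem_map, hword,
      Finset.mem_toList, Finset.mem_attach, forall_const, Subtype.forall, MatchesAt, Fin.val_inj]
  refine ⟨F.map code, Set.ext fun x => ?_⟩
  simp [codedSFT, cylinder_code]

theorem patternCylinder_prefixCoding_snoc_subset (v : List ℕ) (a : ℕ) :
    patternCylinder σ n (prefixCoding k (v ++ [a])) ⊆ patternCylinder σ n (prefixCoding k v) :=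
  fun _ hx q hq => hx q (by rw [prefixCoding_snoc]; exact List.mem_append_left _ hq)

theorem exists_lt_mem_patternCylinder_snoc {v : List ℕ} {x : G → Fin n}
    (hx : x ∈ patternCylinder σ n (prefixCoding k v)) :
    ∃ a < n, x ∈ patternCylinder σ n (prefixCoding k (v ++ [a])) := by
  cases hd : decode (α := List (Fin k × Bool)) v.length with
  | none =>
    refine ⟨(x 1).val, (x 1).isLt, fun q hq => ?_⟩
    rw [prefixCoding_snoc, hd, Option.map_none, Option.toList_none, List.append_nil] at hq
    exact hx q hq
  | some l =>
    refine ⟨(x (wordVal σ l)).val, (x (wordVal σ l)).isLt, fun q hq => ?_⟩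
    rw [prefixCoding_snoc, hd, List.mem_append] at hq
    rcases hq with hq | hq
    · exact hx q hq
    · simp_all

theorem confFun_comp_cover (x : G → Fin n) (m : ℕ) :
    confFun (x ∘ cover σ) m =
      encode ((decode (α := List (Fin k × Bool)) m).map fun l => (x (wordVal σ l)).val) := by
  show encode (((decode (α := List (Fin k × Bool)) m).bind fun l => some (FreeGroup.mk l)).map
    (x ∘ cover σ)) = _
  cases decode (α := List (Fin k × Bool)) m <;> rfl

end CodedSFT

section Greedy

variable (T : List ℕ → Bool) (n : ℕ)

def greedyLetter (v : List ℕ) : ℕ → ℕ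
  | 0 => 0
  | j + 1 => bif T (v ++ [j]) then j else greedyLetter v j

def greedyPrefix : ℕ → List ℕ
  | 0 => []
  | m + 1 => greedyPrefix m ++ [greedyLetter T (greedyPrefix m) n]

def greedyConf (k : ℕ) (m : ℕ) : ℕ :=
  encode ((decode (α := List (Fin k × Bool)) m).map fun _ => (greedyPrefix T n (m + 1)).getD m 0)

variable {T n}

theorem greedyLetter_spec {v : List ℕ} {N : ℕ} (h : ∃ a < N, T (v ++ [a]) = true) :
    T (v ++ [greedyLetter T v N]) = true := by
  induction N with
  | zero => simp at h
  | succ j ih =>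
    by_cases hj : T (v ++ [j]) = true
    · simp [greedyLetter, hj]
    · obtain ⟨a, ha, hTa⟩ := h
      have haj : a < j := by
        rcases Nat.lt_succ_iff_lt_or_eq.1 ha with ha | rfl
        · exact ha
        · exact absurd hTa hj
      simpa [greedyLetter, hj] using ih ⟨a, haj, hTa⟩

theorem length_greedyPrefix (m : ℕ) : (greedyPrefix T n m).length = m := by
  induction m with
  | zero => rfl
  | succ m ih => simp [greedyPrefix, ih]

theorem greedyLetter_computable (hT : Computable T) :
    Computable fun v => greedyLetter T v n := by
  have hstep : Computable₂ fun (v : List ℕ) (p : ℕ × ℕ) =>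
      bif T (v ++ [p.1]) then p.1 else p.2 :=
    (Computable.cond (hT.comp (Computable.list_concat.comp Computable.fst
      (Computable.fst.comp Computable.snd)))
      (Computable.fst.comp Computable.snd) (Computable.snd.comp Computable.snd)).to₂
  refine (Computable.nat_rec (Computable.const n) (Computable.const 0) hstep).of_eq fun v => ?_
  induction n with
  | zero => rfl
  | succ j ih => simp only [greedyLetter, ← ih]

theorem greedyPrefix_computable (hT : Computable T) : Computable (greedyPrefix T n) := by
  have hstep : Computable₂ fun (_ : ℕ) (p : ℕ × List ℕ) => p.2 ++ [greedyLetter T p.2 n] :=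
    (Computable.list_concat.comp (Computable.snd.comp Computable.snd)
      ((greedyLetter_computable hT).comp (Computable.snd.comp Computable.snd))).to₂
  refine (Computable.nat_rec (f := fun m => m) Computable.id (Computable.const []) hstep).of_eq
    fun m => ?_
  induction m with
  | zero => rfl
  | succ j ih => simp only [greedyPrefix, ← ih]

theorem greedyConf_computable (hT : Computable T) (k : ℕ) : Computable (greedyConf T n k) := by
  have hval : Computable₂ fun (m : ℕ) (_ : List (Fin k × Bool)) =>
      (greedyPrefix T n (m + 1)).getD m 0 :=
    (((Primrec.list_getD 0).to_comp.comp ((greedyPrefix_computable hT).comp Computable.succ)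
      Computable.id).comp Computable.fst).to₂
  exact Computable.encode.comp (Computable.option_map Computable.decode hval)

variable {G : Type*} [Group G] {k : ℕ} {σ : Fin k → G}

theorem exists_computable_mem_of_decidable_patterns {Z : Set (G → Fin n)} (hZ : IsClosed Z)
    (hne : Z.Nonempty) (hT : Computable T)
    (hTZ : ∀ v, T v = true ↔ (Z ∩ patternCylinder σ n (prefixCoding k v)).Nonempty) :
    ∃ x ∈ Z, Computable (confFun (x ∘ cover σ)) := by
  set K : ℕ → Set (G → Fin n) :=
    fun m => Z ∩ patternCylinder σ n (prefixCoding k (greedyPrefix T n m))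
  have hK_nonempty : ∀ m, (K m).Nonempty := by
    intro m
    induction m with
    | zero => simpa [K, greedyPrefix, prefixCoding, patternCylinder] using hne
    | succ m ih =>
      obtain ⟨x, hxZ, hx⟩ := ih
      obtain ⟨a, ha, hxa⟩ := exists_lt_mem_patternCylinder_snoc hx
      exact (hTZ _).1 (greedyLetter_spec ⟨a, ha, (hTZ _).2 ⟨x, hxZ, hxa⟩⟩)
  have hK_closed : ∀ m, IsClosed (K m) := fun m => hZ.inter (isClosed_patternCylinder _)
  obtain ⟨x, hx⟩ := IsCompact.nonempty_iInter_of_sequence_nonempty_isCompact_isClosed K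
    (fun m => Set.inter_subset_inter_right _ (patternCylinder_prefixCoding_snoc_subset _ _))
    hK_nonempty (hK_closed 0).isCompact hK_closed
  have hx_val : ∀ m l, decode (α := List (Fin k × Bool)) m = some l →
      (x (wordVal σ l)).val = (greedyPrefix T n (m + 1)).getD m 0 := fun m l hd =>
    (Set.mem_iInter.1 hx (m + 1)).2 _
      (mem_prefixCoding (by rw [length_greedyPrefix]; exact m.lt_succ_self) hd)
  refine ⟨x, (Set.mem_iInter.1 hx 0).1, (greedyConf_computable (n := n) hT k).of_eq fun m => ?_⟩
  rw [confFun_comp_cover, greedyConf]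
  cases hd : decode (α := List (Fin k × Bool)) m with
  | none => rfl
  | some l => simp [hx_val m l hd]

end Greedy

section DominoDecider

variable {k : ℕ} (φ : ℕ × List (PatternCoding k) → Bool) (n : ℕ)
  (D : List (PatternCoding k))

def codingChain : ℕ → List (PatternCoding k)
  | 0 => D
  | i + 1 => bif φ (n, codingChain i ++ [enumCoding k i])
      then codingChain i ++ [enumCoding k i] else codingChain i

def occursTest (v : List ℕ) : Bool :=
  !φ (n, codingChain φ n D (encode v) ++ [prefixCoding k v])

theorem codingChain_computable (hφ : Computable φ) : Computable (codingChain φ n D) := by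
  have hext : Computable fun p : ℕ × List (PatternCoding k) => p.2 ++ [enumCoding k p.1] :=
    Computable.list_concat.comp Computable.snd (enumCoding_primrec.to_comp.comp Computable.fst)
  have hstep : Computable₂ fun (_ : ℕ) (p : ℕ × List (PatternCoding k)) =>
      bif φ (n, p.2 ++ [enumCoding k p.1]) then p.2 ++ [enumCoding k p.1] else p.2 :=
    ((Computable.cond (hφ.comp ((Computable.const n).pair hext)) hext Computable.snd).comp
      Computable.snd).to₂
  refine (Computable.nat_rec (f := fun i => i) Computable.id (Computable.const D) hstep).of_eq
    fun i => ?_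
  induction i with
  | zero => rfl
  | succ j ih => simp only [codingChain, ← ih]

theorem occursTest_computable (hφ : Computable φ) : Computable (occursTest φ n D) :=
  Primrec.not.to_comp.comp (hφ.comp ((Computable.const n).pair
    (Computable.list_concat.comp ((codingChain_computable φ n D hφ).comp Computable.encode)
      prefixCoding_primrec.to_comp)))

variable {G : Type*} [Group G] (σ : Fin k → G)

def chainLimit : Set (G → Fin n) := ⋂ i, codedSFT σ n (codingChain φ n D i)

def DecidesCodedSFTNonempty : Prop := ∀ D', φ (n, D') = true ↔ (codedSFT σ n D').Nonempty

variable {φ n D σ}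

theorem codedSFT_codingChain_succ_subset (i : ℕ) :
    codedSFT σ n (codingChain φ n D (i + 1)) ⊆ codedSFT σ n (codingChain φ n D i) := by
  cases h : φ (n, codingChain φ n D i ++ [enumCoding k i])
  · simp [codingChain, h]
  · simpa [codingChain, h] using codedSFT_append_subset _ _

theorem codedSFT_codingChain_nonempty (hφ : DecidesCodedSFTNonempty φ n σ)
    (hD : (codedSFT σ n D).Nonempty) (i : ℕ) :
    (codedSFT σ n (codingChain φ n D i)).Nonempty := by
  induction i with
  | zero => exact hD
  | succ i ih =>
    cases h : φ (n, codingChain φ n D i ++ [enumCoding k i])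
    · simpa [codingChain, h] using ih
    · simpa [codingChain, h] using (hφ _).1 h

theorem chainLimit_nonempty (hφ : DecidesCodedSFTNonempty φ n σ)
    (hD : (codedSFT σ n D).Nonempty) :
    (chainLimit φ n D σ).Nonempty :=
  IsCompact.nonempty_iInter_of_sequence_nonempty_isCompact_isClosed _
    codedSFT_codingChain_succ_subset (codedSFT_codingChain_nonempty hφ hD)
    (isClosed_codedSFT _).isCompact fun _ => isClosed_codedSFT _

theorem occursTest_iff (hφ : DecidesCodedSFTNonempty φ n σ)
    (hD : (codedSFT σ n D).Nonempty) (v : List ℕ) :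
    occursTest φ n D v = true ↔
      (chainLimit φ n D σ ∩ patternCylinder σ n (prefixCoding k v)).Nonempty := by
  have hx_chain : ∀ x ∈ chainLimit φ n D σ, ∀ i,
      x ∈ codedSFT σ n (codingChain φ n D i) := fun x hx => Set.mem_iInter.1 hx
  constructor
  · intro htest
    have hempty :
        ¬(codedSFT σ n (codingChain φ n D (encode v) ++ [prefixCoding k v])).Nonempty := by
      rw [← hφ]; simpa [occursTest] using htest
    obtain ⟨x, hx⟩ := chainLimit_nonempty hφ hD
    obtain ⟨g, hg⟩ : ∃ g, shift g x ∈ patternCylinder σ n (prefixCoding k v) := by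
      by_contra! h
      exact hempty ⟨x, mem_codedSFT_append_singleton.2 ⟨hx_chain x hx _, h⟩⟩
    refine ⟨shift g x, Set.mem_iInter.2 fun i => shift_mem_codedSFT (hx_chain x hx i) g, hg⟩
  · rintro ⟨x, hx, hxv⟩
    by_contra htest
    have hadded : codingChain φ n D (encode v + 1) =
        codingChain φ n D (encode v) ++ [prefixCoding k v] := by
      have hkept : φ (n, codingChain φ n D (encode v) ++ [prefixCoding k v]) = true := by
        simpa [occursTest] using htest
      simp [codingChain, enumCoding_encode, hkept]
    have hno_occurrence :=
      (mem_codedSFT_append_singleton.1 (hadded ▸ hx_chain x hx (encode v + 1))).2 1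
    exact hno_occurrence (by rwa [shift_one])

end DominoDecider

/-- If a finitely generated group `G` admits a nonempty SFT with nonzero Medvedev degree,
then the domino problem of `G` is undecidable: no computable function decides, given a
finite set of pattern codings, whether the `G`-SFT they define is nonempty. -/
theorem statement18 {G : Type*} [Group G] {k : ℕ} (σ : Fin k → G) (hσ : IsSymmGen σ)
    (hX : ∃ (n : ℕ) (X : Set (G → Fin n)), IsSFT X ∧ X.Nonempty ∧
      ∀ y ∈ mSet (pullback (cover σ) X), ¬Computable y) :
    ¬∃ φ : ℕ × List (List (List (Fin k × Bool) × ℕ)) → Bool, Computable φ ∧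
      ∀ input, (φ input = true ↔ codingSFTNonempty σ input) := by
  rintro ⟨φ, hφ, hdecides⟩
  obtain ⟨n, X, hSFT, hne, hnoncomputable⟩ := hX
  obtain ⟨D, rfl⟩ := exists_codedSFT_eq hσ.1 hSFT
  have hφ_spec : DecidesCodedSFTNonempty φ n σ :=
    fun D' => (hdecides _).trans codingSFTNonempty_iff
  obtain ⟨x, hx, hcomputable⟩ := exists_computable_mem_of_decidable_patterns
    (isClosed_iInter fun _ => isClosed_codedSFT _) (chainLimit_nonempty hφ_spec hne)
    (occursTest_computable φ n D hφ) (occursTest_iff hφ_spec hne)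
  exact hnoncomputable _ ⟨_, ⟨x, Set.mem_iInter.1 hx 0, rfl⟩, rfl⟩ hcomputable

end MedvedevFormal
end
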